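/- arXiv:1205.0477 — 8 statements merged into one kernel-verified Lean document; each statement's English description precedes it below -/
import Mathlib

section
/- Let δ be a real number and let t, N be natural numbers with t ≥ 1 and N > 2t. Let u and w be lists of real numbers of length N, and suppose there exists a permutation e of {0,…,N−1} such that u[i] + δ ≤ w[e(i)] for every index i. Let u' (resp. w') be the list obtained from the nondecreasing sorting of u (resp. w) by deleting its first t entries and its last t entries, so that u' and w' have length N − 2t. Then for every nonempty finite set S of indices in {0,…,N−2t−1}, (∑_{i∈S} u'[i]) / |S| + δ ≤ (∑_{i∈S} w'[i]) / |S|. -/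
/-!
The `k`-th smallest entry of a list is at most `x` exactly when more than `k` entries are at most
`x`. If the entries of `u` are matched bijectively with those of `w` so that `a + δ ≤ b`, each
entry of `w` that is at most `y` is matched with an entry of `u` that is at most `y - δ`; taking
for `y` the `k`-th smallest entry of `w` shows that the `k`-th smallest entry of `u` is at most
`y - δ`. So the sorted lists keep the gap entrywise, and trimming and averaging preserve it.
-/

namespace List

section

variable {α β : Type*}

theorem Forall₂.countP_le_countP {R : α → β → Prop} {p : α → Bool} {q : β → Bool}
    {l₁ : List α} {l₂ : List β} (h : Forall₂ R l₁ l₂) (hpq : ∀ a b, R a b → q b → p a) :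
    l₂.countP q ≤ l₁.countP p := by
  induction h with
  | nil => simp
  | @cons a b _ _ hab _ ih =>
    have := hpq a b hab
    simp only [countP_cons]
    split_ifs <;> grind

theorem forall₂_ofFn {n : ℕ} {R : α → β → Prop} {f : Fin n → α} {g : Fin n → β}
    (h : ∀ i, R (f i) (g i)) : Forall₂ R (ofFn f) (ofFn g) :=
  forall₂_iff_get.2 ⟨by simp, fun i hi _ => by simpa using h ⟨i, by simpa using hi⟩⟩

theorem ofFn_getD_of_length_eq {n : ℕ} {l : List α} (hl : l.length = n) (d : α) :
    ofFn (fun i : Fin n => l.getD i d) = l := by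
  subst hl
  simp

theorem getD_take_drop {l : List α} {t m i : ℕ} (hi : i < m) (d : α) :
    ((l.drop t).take m).getD i d = l.getD (t + i) d := by
  simp [getD_eq_getElem?_getD, hi]

end

section

variable {α β : Type*} [LinearOrder α] [LinearOrder β]

theorem Perm.insertionSort_eq {l₁ l₂ : List α} (h : l₁ ~ l₂) :
    l₁.insertionSort (· ≤ ·) = l₂.insertionSort (· ≤ ·) :=
  ((perm_insertionSort _ l₁).trans (h.trans (perm_insertionSort (· ≤ ·) l₂).symm)).eq_of_sortedLE
    sortedLE_insertionSort sortedLE_insertionSort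

theorem SortedLE.lt_countP_of_getElem_le {l : List α} (hl : l.SortedLE) {k : ℕ}
    (hk : k < l.length) {x : α} (hx : l[k] ≤ x) : k < l.countP (· ≤ x) :=
  calc k < (l.take (k + 1)).length := by simp [hk]
    _ = (l.take (k + 1)).countP (· ≤ x) := by
      refine (countP_eq_length.2 fun y hy => ?_).symm
      obtain ⟨i, hi, rfl⟩ := mem_iff_getElem.1 hy
      simp only [length_take, getElem_take, decide_eq_true_eq] at hi ⊢
      exact (hl.getElem_le_getElem_of_le (by omega)).trans hx
    _ ≤ l.countP (· ≤ x) := (take_sublist _ _).countP_le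

theorem SortedLE.getElem_lt_of_lt_countP {l : List α} (hl : l.SortedLE) {k : ℕ}
    (hk : k < l.length) {x : α} (hx : k < l.countP (· < x)) : l[k] < x := by
  by_contra! hxk
  have hdrop : (l.drop k).countP (· < x) = 0 := by
    refine countP_eq_zero.2 fun y hy => ?_
    obtain ⟨i, hi, rfl⟩ := mem_iff_getElem.1 hy
    simp only [length_drop, getElem_drop, decide_eq_true_eq, not_lt] at hi ⊢
    exact hxk.trans (hl.getElem_le_getElem_of_le (by omega))
  have htake := countP_le_length (p := (· < x)) (l := l.take k)
  rw [← take_append_drop k l, countP_append, hdrop] at hx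
  simp only [length_take] at htake
  omega

theorem Forall₂.apply_getElem_insertionSort_le {f : α → β} (hf : Monotone f) {l₁ : List α}
    {l₂ : List β} (h : Forall₂ (fun a b => f a ≤ b) l₁ l₂) {k : ℕ}
    (h₁ : k < (l₁.insertionSort (· ≤ ·)).length) (h₂ : k < (l₂.insertionSort (· ≤ ·)).length) :
    f (l₁.insertionSort (· ≤ ·))[k] ≤ (l₂.insertionSort (· ≤ ·))[k] := by
  set A := (l₁.insertionSort (· ≤ ·))[k]
  set B := (l₂.insertionSort (· ≤ ·))[k]
  by_contra! hlt
  have hB : k < l₂.countP (· ≤ B) := (perm_insertionSort (· ≤ ·) l₂).countP_eq _ ▸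
    sortedLE_insertionSort.lt_countP_of_getElem_le h₂ le_rfl
  have hcount : l₂.countP (· ≤ B) ≤ l₁.countP (· < A) := h.countP_le_countP fun a b hab hb => by
    simp only [decide_eq_true_eq] at hb ⊢
    exact hf.reflect_lt (hab.trans_lt (hb.trans_lt hlt))
  have hA : k < (l₁.insertionSort (· ≤ ·)).countP (· < A) := by
    rw [(perm_insertionSort (· ≤ ·) l₁).countP_eq]
    omega
  exact (sortedLE_insertionSort.getElem_lt_of_lt_countP h₁ hA).false

end

end List

theorem Finset.sum_div_card_add_le_sum_div_card {ι K : Type*} [Field K] [LinearOrder K]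
    [IsStrictOrderedRing K] {s : Finset ι} (hs : s.Nonempty) {f g : ι → K} {c : K}
    (h : ∀ i ∈ s, f i + c ≤ g i) :
    (∑ i ∈ s, f i) / s.card + c ≤ (∑ i ∈ s, g i) / s.card := by
  have hcard : (0 : K) < s.card := by exact_mod_cast hs.card_pos
  calc (∑ i ∈ s, f i) / s.card + c = (∑ i ∈ s, (f i + c)) / s.card := by
        rw [sum_add_distrib, sum_const, nsmul_eq_mul, add_div, mul_div_cancel_left₀ _ hcard.ne']
    _ ≤ (∑ i ∈ s, g i) / s.card := div_le_div_of_nonneg_right (sum_le_sum h) hcard.le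

theorem trimmed_select_avg_gap_general (δ : ℝ) (t N : ℕ)
    (u w : List ℝ) (hu : u.length = N) (hw : w.length = N)
    (h : ∃ e : Equiv.Perm (Fin N),
      ∀ i : Fin N, u.getD i 0 + δ ≤ w.getD (e i) 0) :
    ∀ S : Finset (Fin (N - 2 * t)), S.Nonempty →
      (∑ i ∈ S, (((u.insertionSort (· ≤ ·)).drop t).take (N - 2 * t)).getD i 0) / S.card + δ ≤
      (∑ i ∈ S, (((w.insertionSort (· ≤ ·)).drop t).take (N - 2 * t)).getD i 0) / S.card := by
  obtain ⟨e, he⟩ := h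
  have hperm : List.ofFn (fun i => w.getD (e i) 0) |>.Perm w :=
    (e.ofFn_comp_perm fun i => w.getD i 0).trans (.of_eq (List.ofFn_getD_of_length_eq hw 0))
  have hrel : List.Forall₂ (fun a b => a + δ ≤ b) u (List.ofFn fun i => w.getD (e i) 0) :=
    List.ofFn_getD_of_length_eq hu 0 ▸ List.forall₂_ofFn he
  have hsorted (k : ℕ) (hk : k < N) :
      (u.insertionSort (· ≤ ·)).getD k 0 + δ ≤ (w.insertionSort (· ≤ ·)).getD k 0 := by
    rw [← hperm.insertionSort_eq, List.getD_eq_getElem _ _ (by simpa [hu]),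
      List.getD_eq_getElem _ _ (by simpa)]
    exact hrel.apply_getElem_insertionSort_le (f := (· + δ))
      (fun _ _ hab => add_le_add_left hab δ) _ _
  intro S hS
  refine Finset.sum_div_card_add_le_sum_div_card hS fun i _ => ?_
  rw [List.getD_take_drop i.isLt, List.getD_take_drop i.isLt]
  exact hsorted _ (by omega)

theorem trimmed_select_avg_gap (δ : ℝ) (t N : ℕ) (ht : 1 ≤ t) (hN : 2 * t < N)
    (u w : List ℝ) (hu : u.length = N) (hw : w.length = N)
    (h : ∃ e : Equiv.Perm (Fin N),
      ∀ i : Fin N, u.getD i 0 + δ ≤ w.getD (e i) 0) :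
    ∀ S : Finset (Fin (N - 2 * t)), S.Nonempty →
      (∑ i ∈ S, (((u.insertionSort (· ≤ ·)).drop t).take (N - 2 * t)).getD i 0) / S.card + δ ≤
      (∑ i ∈ S, (((w.insertionSort (· ≤ ·)).drop t).take (N - 2 * t)).getD i 0) / S.card :=
  trimmed_select_avg_gap_general δ t N u w hu hw h
end

section
/- Let t ≥ 1 be a natural number and let a and b be lists of real numbers of equal length m, each sorted in nondecreasing order. Suppose the multiset difference of b minus a (the multiset of elements of b not matched, with multiplicity, by elements of a) has cardinality at most t. Then for all natural numbers i with (i+1)·t < m, a[i·t] ≤ b[(i+1)·t]. -/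
/-!
If `b[(i+1)t] < x := a[it]`, then more than `(i+1)t` elements of `b` lie below `x` but at most `it`
elements of `a` do. Since `b ≤ (b - a) + a` as multisets, at least `t + 1` of those elements of `b`
lie in `b - a`, contradicting `card (b - a) ≤ t`.
-/

section SortedCount

variable {α : Type*} [Preorder α] [DecidableLT α] {l : List α}

theorem List.Pairwise.countP_lt_getElem_le (hl : l.Pairwise (· ≤ ·)) {n : ℕ} (hn : n < l.length) :
    l.countP (· < l[n]) ≤ n := by
  have hdrop : (l.drop n).countP (· < l[n]) = 0 := by
    refine List.countP_eq_zero.mpr fun z hz => ?_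
    obtain ⟨j, hj, rfl⟩ := List.getElem_of_mem hz
    rw [List.getElem_drop]
    simpa using not_lt_of_ge
      (hl.rel_get_of_le (a := ⟨n, hn⟩) (b := ⟨n + j, by simp at hj; omega⟩) (by simp))
  calc l.countP (· < l[n])
      = (l.take n).countP (· < l[n]) + (l.drop n).countP (· < l[n]) := by
        rw [← List.countP_append, List.take_append_drop]
    _ ≤ n := by
        rw [hdrop, add_zero]
        exact (List.countP_le_length).trans (List.length_take_le _ _)

theorem List.Pairwise.lt_countP_lt (hl : l.Pairwise (· ≤ ·)) {k : ℕ} (hk : k < l.length) {x : α}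
    (hx : l[k] < x) : k < l.countP (· < x) := by
  have htake : (l.take (k + 1)).countP (· < x) = k + 1 := by
    rw [List.countP_eq_length.mpr, List.length_take_of_le hk]
    intro z hz
    obtain ⟨j, hj, rfl⟩ := List.getElem_of_mem hz
    rw [List.getElem_take]
    have hjk : j ≤ k := by simp at hj; omega
    exact decide_eq_true ((hl.rel_get_of_le (a := ⟨j, by omega⟩) (b := ⟨k, hk⟩) hjk).trans_lt hx)
  calc k < (l.take (k + 1)).countP (· < x) := by omega
    _ ≤ l.countP (· < x) := (List.take_sublist _ _).countP_le

end SortedCount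

theorem Multiset.countP_le_card_tsub_add_countP {α : Type*} [DecidableEq α] (p : α → Prop)
    [DecidablePred p] (s t : Multiset α) : s.countP p ≤ (s - t).card + t.countP p :=
  calc s.countP p ≤ (s - t + t).countP p := Multiset.countP_le_of_le p le_tsub_add
    _ = (s - t).countP p + t.countP p := Multiset.countP_add _ _ _
    _ ≤ (s - t).card + t.countP p := by grw [Multiset.countP_le_card]

theorem sorted_interleaving_general (t : ℕ) (a b : List ℝ) (m : ℕ)
    (ha : a.length = m) (hb : b.length = m)
    (hsa : a.Pairwise (· ≤ ·)) (hsb : b.Pairwise (· ≤ ·))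
    (hdiff : ((b : Multiset ℝ) - (a : Multiset ℝ)).card ≤ t) :
    ∀ i : ℕ, (i + 1) * t < m → a.getD (i * t) 0 ≤ b.getD ((i + 1) * t) 0 := by
  intro i hi
  rw [add_one_mul] at hi ⊢
  have hn : i * t < a.length := by omega
  have hk : i * t + t < b.length := by omega
  rw [List.getD_eq_getElem _ _ hn, List.getD_eq_getElem _ _ hk]
  by_contra! hlt
  have hb_many := hsb.lt_countP_lt hk hlt
  have ha_few := hsa.countP_lt_getElem_le hn
  have hsplit := Multiset.countP_le_card_tsub_add_countP (· < a[i * t]) (b : Multiset ℝ) a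
  simp only [Multiset.coe_countP] at hsplit
  omega

theorem sorted_interleaving (t : ℕ) (ht : 1 ≤ t) (a b : List ℝ) (m : ℕ)
    (ha : a.length = m) (hb : b.length = m)
    (hsa : a.Pairwise (· ≤ ·)) (hsb : b.Pairwise (· ≤ ·))
    (hdiff : ((b : Multiset ℝ) - (a : Multiset ℝ)).card ≤ t) :
    ∀ i : ℕ, (i + 1) * t < m → a.getD (i * t) 0 ≤ b.getD ((i + 1) * t) 0 :=
  sorted_interleaving_general t a b m ha hb hsa hsb hdiff
end

section
/- Let c ≥ 1 be a natural number and let a, b : Fin c → ℝ be such that for every index i with i + 1 < c, max(a(i), b(i)) ≤ min(a(i+1), b(i+1)). Then ∑_{i<c} |a(i) − b(i)| ≤ max(a(c−1), b(c−1)) − min(a(0), b(0)); consequently, |(∑_{i<c} a(i))/c − (∑_{i<c} b(i))/c| ≤ (max(a(c−1), b(c−1)) − min(a(0), b(0)))/c. -/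
open Finset

/-- The sum falls short of the span `upper n - lower 0` exactly by the gaps
`lower (i + 1) - upper i`, which the chain condition makes nonnegative. -/
theorem Finset.sum_range_succ_sub_le_of_chain {α : Type*} [AddCommGroup α] [PartialOrder α]
    [IsOrderedAddMonoid α] {lower upper : ℕ → α} {n : ℕ}
    (hchain : ∀ i < n, upper i ≤ lower (i + 1)) :
    ∑ i ∈ range (n + 1), (upper i - lower i) ≤ upper n - lower 0 := by
  induction n with
  | zero => simp
  | succ k ih =>
    have hgap : 0 ≤ lower (k + 1) - upper k := sub_nonneg.mpr (hchain k k.lt_succ_self)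
    calc ∑ i ∈ range (k + 1 + 1), (upper i - lower i)
        ≤ upper k - lower 0 + (upper (k + 1) - lower (k + 1)) := by
          rw [sum_range_succ]
          exact add_le_add_left (ih fun i hik => hchain i (by omega)) _
      _ = upper (k + 1) - lower 0 - (lower (k + 1) - upper k) := by abel
      _ ≤ upper (k + 1) - lower 0 := sub_le_self _ hgap

theorem telescoping_avg_bound (c : ℕ) (hc : 1 ≤ c) (a b : Fin c → ℝ)
    (h : ∀ i : ℕ, (hi : i + 1 < c) →
      max (a ⟨i, by omega⟩) (b ⟨i, by omega⟩) ≤ min (a ⟨i + 1, hi⟩) (b ⟨i + 1, hi⟩)) :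
    (∑ i, |a i - b i| ≤
      max (a ⟨c - 1, by omega⟩) (b ⟨c - 1, by omega⟩) - min (a ⟨0, by omega⟩) (b ⟨0, by omega⟩)) ∧
    |(∑ i, a i) / c - (∑ i, b i) / c| ≤
      (max (a ⟨c - 1, by omega⟩) (b ⟨c - 1, by omega⟩) -
        min (a ⟨0, by omega⟩) (b ⟨0, by omega⟩)) / c := by
  set upper : ℕ → ℝ := fun i => if hic : i < c then max (a ⟨i, hic⟩) (b ⟨i, hic⟩) else 0
  set lower : ℕ → ℝ := fun i => if hic : i < c then min (a ⟨i, hic⟩) (b ⟨i, hic⟩) else 0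
  have habs : ∑ i, |a i - b i| = ∑ i ∈ range c, (upper i - lower i) := by
    rw [← Fin.sum_univ_eq_sum_range]
    refine sum_congr rfl fun i _ => ?_
    simp [upper, lower, max_sub_min_eq_abs']
  have hspan : ∑ i, |a i - b i| ≤
      max (a ⟨c - 1, by omega⟩) (b ⟨c - 1, by omega⟩) - min (a ⟨0, by omega⟩) (b ⟨0, by omega⟩) := by
    have hchain : ∀ i < c - 1, upper i ≤ lower (i + 1) := fun i hic => by
      simpa [upper, lower, show i < c by omega, show i + 1 < c by omega] using h i (by omega)
    have := sum_range_succ_sub_le_of_chain hchain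
    rw [Nat.sub_add_cancel hc, ← habs] at this
    simpa [upper, lower, show c - 1 < c by omega, show 0 < c by omega] using this
  refine ⟨hspan, ?_⟩
  calc |(∑ i, a i) / c - (∑ i, b i) / c| = |∑ i, (a i - b i)| / c := by
        rw [div_sub_div_same, ← sum_sub_distrib, abs_div, Nat.abs_cast]
    _ ≤ (∑ i, |a i - b i|) / c := by gcongr; exact abs_sum_le_sum_abs _ _
    _ ≤ _ := by gcongr
end

section
/- Let t and N be natural numbers with 2t < N. Let V and C be multisets of real numbers with C ≤ V (C is a sub-multiset of V), card(V) = N, card(C) ≥ N − t, and C nonempty. Let A be the t-trimmed list of V. Then every element x of A satisfies min(C) ≤ x ≤ max(C). -/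
lemma count_aux (V C : Multiset ℝ) (hCV : C ≤ V) (p : ℝ → Prop) [DecidablePred p]
    (hp : ∀ c ∈ C, ¬ p c) :
    (V.filter p).card ≤ Multiset.card V - Multiset.card C := by
  have h0 : V.filter p = (V - C).filter p := by
    conv_lhs => rw [← tsub_add_cancel_of_le hCV]
    rw [Multiset.filter_add, Multiset.filter_eq_nil.mpr hp, add_zero]
  rw [h0, ← Multiset.card_sub hCV]
  exact Multiset.card_le_card (Multiset.filter_le _ _)

lemma card_filter_sort (V : Multiset ℝ) (p : ℝ → Prop) [DecidablePred p] :
    (V.filter p).card = ((V.sort (· ≤ ·)).filter p).length := by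
  rw [← Multiset.coe_card, ← Multiset.filter_coe, Multiset.sort_eq]

theorem trimmed_within_correct_range (t N : ℕ) (hN : 2 * t < N)
    (V C : Multiset ℝ) (hCV : C ≤ V) (hV : Multiset.card V = N)
    (hC : N - t ≤ Multiset.card C) (hCne : C ≠ 0) :
    ∀ x ∈ (((V.sort (· ≤ ·)).drop t).take (N - 2 * t)),
      C.toFinset.min' (by simpa using hCne) ≤ x ∧
      x ≤ C.toFinset.max' (by simpa using hCne) := by
  set L := V.sort (· ≤ ·) with hLdef
  have hLsort : L.Pairwise (· ≤ ·) := V.pairwise_sort _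
  have hlen : L.length = N := by rw [hLdef, Multiset.length_sort, hV]
  have hCcard : Multiset.card C ≤ N := hV ▸ Multiset.card_le_card hCV
  have hmono : ∀ i j : ℕ, (hi : i ≤ j) → (hj : j < L.length) → L[i]'(lt_of_le_of_lt hi hj) ≤ L[j] := by
    intro i j hi hj
    rcases eq_or_lt_of_le hi with rfl | h
    · exact le_refl _
    · exact List.pairwise_iff_getElem.mp hLsort i j _ hj h
  intro x hx
  obtain ⟨j, hj, hxj⟩ := List.mem_iff_getElem.mp hx
  rw [List.getElem_take, List.getElem_drop] at hxj
  have hjlt : j < N - 2 * t := lt_of_lt_of_le hj (by simp [List.length_take, List.length_drop])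
  have hij : t + j < L.length := by omega
  set i := t + j with hidef
  have hit : t ≤ i := by omega
  have hiN : i < N - t := by omega
  subst hxj
  constructor
  · by_contra h
    push_neg at h
    set m := C.toFinset.min' (by simpa using hCne) with hm
    have hall : ∀ y ∈ L.take (i + 1), y < m := by
      intro y hy
      obtain ⟨k, hk, rfl⟩ := List.mem_iff_getElem.mp hy
      rw [List.getElem_take]
      have hk' : k ≤ i := by
        have := hk
        simp [List.length_take] at this
        omega
      exact lt_of_le_of_lt (hmono k i hk' hij) h
    have hsub : List.Sublist ((L.take (i + 1)).filter (fun y => decide (y < m))) (L.filter (fun y => decide (y < m))) :=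
      (List.take_sublist _ _).filter _
    have heq : ((L.take (i + 1)).filter (fun y => decide (y < m))) = L.take (i + 1) :=
      List.filter_eq_self.mpr (fun y hy => by simpa using hall y hy)
    have hlen1 : (L.take (i + 1)).length = i + 1 := by
      rw [List.length_take]; omega
    have hge : i + 1 ≤ (L.filter (fun y => decide (y < m))).length := by
      have := hsub.length_le
      rwa [heq, hlen1] at this
    have hle : (L.filter (fun y => decide (y < m))).length ≤ t := by
      have h1 : (V.filter (fun y => y < m)).card ≤ Multiset.card V - Multiset.card C := by
        refine count_aux V C hCV _ ?_
        intro c hc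
        exact not_lt.mpr (C.toFinset.min'_le c (Multiset.mem_toFinset.mpr hc))
      rw [card_filter_sort] at h1
      calc (L.filter (fun y => decide (y < m))).length
          = ((V.sort (· ≤ ·)).filter (fun b => decide (b < m))).length := rfl
        _ ≤ Multiset.card V - Multiset.card C := h1
        _ ≤ t := by omega
    omega
  · by_contra h
    push_neg at h
    set M := C.toFinset.max' (by simpa using hCne) with hM
    have hall : ∀ y ∈ L.drop i, M < y := by
      intro y hy
      obtain ⟨k, hk, rfl⟩ := List.mem_iff_getElem.mp hy
      rw [List.getElem_drop]
      have hk' : i + k < L.length := by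
        simp [List.length_drop] at hk; omega
      exact lt_of_lt_of_le h (hmono i (i + k) (by omega) hk')
    have hsub : List.Sublist ((L.drop i).filter (fun y => decide (M < y))) (L.filter (fun y => decide (M < y))) :=
      (List.drop_sublist _ _).filter _
    have heq : ((L.drop i).filter (fun y => decide (M < y))) = L.drop i :=
      List.filter_eq_self.mpr (fun y hy => by simpa using hall y hy)
    have hlen1 : (L.drop i).length = N - i := by
      rw [List.length_drop, hlen]
    have hge : N - i ≤ (L.filter (fun y => decide (M < y))).length := by
      have := hsub.length_le
      rwa [heq, hlen1] at this
    have hle : (L.filter (fun y => decide (M < y))).length ≤ t := by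
      have h1 : (V.filter (fun y => M < y)).card ≤ Multiset.card V - Multiset.card C := by
        refine count_aux V C hCV _ ?_
        intro c hc
        exact not_lt.mpr (C.toFinset.le_max' c (Multiset.mem_toFinset.mpr hc))
      rw [card_filter_sort] at h1
      calc (L.filter (fun y => decide (M < y))).length
          = ((V.sort (· ≤ ·)).filter (fun b => decide (M < b))).length := rfl
        _ ≤ Multiset.card V - Multiset.card C := h1
        _ ≤ t := by omega
    omega
end

section
/- Let t and N be natural numbers with N > 3t. Let V, W and C be multisets of real numbers with C ≤ V, C ≤ W (C is a sub-multiset of both), card(V) = card(W) = N and card(C) ≥ N − t. Let A (resp. B) be the multiset of entries of the t-trimmed list of V (resp. of W). Then the multiset intersection A ∩ B has cardinality at least N − 3t. -/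
/-!
Sorting is monotone: if `C ≤ V` then `sort C` is a sublist of `sort V`, and since `V` has at
most `t` more entries than `C`, the entry of `sort C` at position `i` sits in `sort V` at a
position between `i` and `i + t`. So the `N - 3t` entries of `sort C` at positions
`t, …, N - 2t - 1` survive the trimming of `V`, and likewise that of `W`.
-/

theorem List.Sublist.take_sublist_take {α : Type*} {x y : List α} (h : x.Sublist y) {k n : ℕ}
    (hkn : k + (y.length - x.length) ≤ n) : (x.take k).Sublist (y.take n) := by
  induction h generalizing k n with
  | slnil => simp
  | @cons x y a h ih =>
    have hxy := h.length_le
    simp only [List.length_cons] at hkn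
    obtain ⟨n, rfl⟩ : ∃ m, n = m + 1 := ⟨n - 1, by omega⟩
    exact (ih (n := n) (by omega)).trans (List.sublist_cons_self a _)
  | @cons_cons x y a h ih =>
    cases k with
    | zero => simp
    | succ k =>
      simp only [List.length_cons] at hkn
      obtain ⟨n, rfl⟩ : ∃ m, n = m + 1 := ⟨n - 1, by omega⟩
      exact (ih (by omega)).cons_cons a

namespace Multiset

variable {α : Type*} (r : α → α → Prop) [DecidableRel r] [IsTrans α r] [Std.Antisymm r]
  [Std.Total r]

theorem sort_sublist_sort_of_le {s u : Multiset α} (h : s ≤ u) :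
    (s.sort r).Sublist (u.sort r) :=
  List.sublist_of_subperm_of_pairwise (by rwa [← coe_le, sort_eq, sort_eq])
    (pairwise_sort s r) (pairwise_sort u r)

theorem take_drop_sort_le_take_drop_sort {s u : Multiset α} (h : s ≤ u) {t k n : ℕ}
    (hkn : k + (card u - card s) ≤ n) :
    ((((s.sort r).drop t).take k : List α) : Multiset α) ≤
      (((u.sort r).drop t).take n : List α) := by
  refine coe_le.mpr (List.Sublist.subperm ?_)
  refine ((sort_sublist_sort_of_le r h).drop t).take_sublist_take ?_
  simp only [List.length_drop, length_sort]
  omega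

end Multiset

theorem trimmed_intersection_card_general (t N : ℕ)
    (V W C : Multiset ℝ) (hCV : C ≤ V) (hCW : C ≤ W)
    (hV : Multiset.card V = N) (hW : Multiset.card W = N)
    (hC : N - t ≤ Multiset.card C) :
    N - 3 * t ≤ Multiset.card
      ((((V.sort (· ≤ ·)).drop t).take (N - 2 * t) : Multiset ℝ) ∩
       (((W.sort (· ≤ ·)).drop t).take (N - 2 * t) : Multiset ℝ)) := by
  obtain hNt | hN := le_or_gt N (3 * t)
  · simp [Nat.sub_eq_zero_of_le hNt]
  set M : List ℝ := ((C.sort (· ≤ ·)).drop t).take (N - 3 * t)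
  calc N - 3 * t = Multiset.card (M : Multiset ℝ) := by
        simp only [Multiset.coe_card, M, List.length_take, List.length_drop, Multiset.length_sort]
        omega
    _ ≤ _ := Multiset.card_le_card <| Multiset.le_inter
      (Multiset.take_drop_sort_le_take_drop_sort _ hCV (by omega))
      (Multiset.take_drop_sort_le_take_drop_sort _ hCW (by omega))

theorem trimmed_intersection_card (t N : ℕ) (hN : 3 * t < N)
    (V W C : Multiset ℝ) (hCV : C ≤ V) (hCW : C ≤ W)
    (hV : Multiset.card V = N) (hW : Multiset.card W = N)
    (hC : N - t ≤ Multiset.card C) :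
    N - 3 * t ≤ Multiset.card
      ((((V.sort (· ≤ ·)).drop t).take (N - 2 * t) : Multiset ℝ) ∩
       (((W.sort (· ≤ ·)).drop t).take (N - 2 * t) : Multiset ℝ)) :=
  trimmed_intersection_card_general t N V W C hCV hCW hV hW hC
end

section
/- Let t and N be natural numbers with t ≥ 1 and N > 3t, and set m = N − 2t and c = ⌊(m−1)/t⌋ + 1. Let V, W and C be multisets of real numbers with C ≤ V, C ≤ W, card(V) = card(W) = N, card(C) ≥ N − t, and C nonempty. Let A (resp. B) be the t-trimmed list of V (resp. of W), each of length m, and define avg_A = (1/c)·∑_{0≤i<c} A[i·t] and avg_B = (1/c)·∑_{0≤i<c} B[i·t]. Then min(C) ≤ avg_A ≤ max(C), min(C) ≤ avg_B ≤ max(C), and |avg_A − avg_B| ≤ (max(C) − min(C))/c. -/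
/-!
Let `L` be the sorted list of `C`. Since `C` is a sub-multiset of `V` missing at most `t` of its
elements, the sorted list of `V` interlaces with `L`: its `(t + k)`-th entry lies between `L[k]`
and `L[k + t]`. Hence the selected entry `A[i t]` lies in `[L[i t], L[(i + 1) t]]`, and likewise
for `B`. So both averages lie within the range of `C`, and since the intervals are consecutive
pieces of the chain `L[0] ≤ L[t] ≤ ⋯ ≤ L[c t]`, the two sums differ by at most
`L[c t] - L[0] ≤ max C - min C`.
-/

namespace List

variable {α : Type*} [Preorder α]

theorem Sublist.getElem_le_getElem_of_sortedLE {l₁ l₂ : List α} (h : l₁ <+ l₂)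
    (h₂ : l₂.SortedLE) {j : ℕ} (hj : j < l₁.length) :
    l₂[j]'(hj.trans_le h.length_le) ≤ l₁[j] := by
  induction h generalizing j with
  | slnil => simp at hj
  | @cons l₁ l₂ a h ih =>
    have := h.length_le
    have htail : l₂.SortedLE := (sortedLE_iff_pairwise.mp h₂).of_cons.sortedLE
    calc (a :: l₂)[j]'(by simp; omega) ≤ (a :: l₂)[j + 1]'(by simp; omega) :=
          h₂.getElem_le_getElem_of_le (by omega)
      _ ≤ l₁[j] := ih htail hj
  | @cons_cons l₁ l₂ a h ih =>
    have htail : l₂.SortedLE := (sortedLE_iff_pairwise.mp h₂).of_cons.sortedLE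
    cases j with
    | zero => exact le_rfl
    | succ k => exact ih htail (by simpa using hj)

theorem Sublist.getElem_le_getElem_add_of_sortedLE {l₁ l₂ : List α} (h : l₁ <+ l₂)
    (h₂ : l₂.SortedLE) {j : ℕ} (hj : j < l₁.length) :
    l₁[j] ≤ l₂[j + (l₂.length - l₁.length)]'(by have := h.length_le; omega) := by
  induction h generalizing j with
  | slnil => simp at hj
  | @cons l₁ l₂ a h ih =>
    have := h.length_le
    have htail : l₂.SortedLE := (sortedLE_iff_pairwise.mp h₂).of_cons.sortedLE
    have hidx : j + ((a :: l₂).length - l₁.length) = j + (l₂.length - l₁.length) + 1 := by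
      simp; omega
    simp only [hidx, getElem_cons_succ]
    exact ih htail hj
  | @cons_cons l₁ l₂ a h ih =>
    have htail : l₂.SortedLE := (sortedLE_iff_pairwise.mp h₂).of_cons.sortedLE
    cases j with
    | zero => exact h₂.getElem_le_getElem_of_le (hi := by simp) (Nat.zero_le _)
    | succ k =>
      have hidx : k + 1 + ((a :: l₂).length - (a :: l₁).length) =
          k + (l₂.length - l₁.length) + 1 := by
        simp; omega
      simp only [hidx, getElem_cons_succ]
      exact ih htail (by simpa using hj)

end List

namespace Multiset

open List in
theorem sort_sublist_sort {α : Type*} [LinearOrder α] {s t : Multiset α} (h : s ≤ t) :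
    s.sort (· ≤ ·) <+ t.sort (· ≤ ·) :=
  sublist_of_subperm_of_pairwise (by rwa [← coe_le, sort_eq, sort_eq])
    (pairwise_sort _ _) (pairwise_sort _ _)

end Multiset

open Multiset in
theorem getD_trimmed_mem_Icc {α : Type*} [LinearOrder α] {C V : Multiset α} {N t k : ℕ}
    (x : α) (hCV : C ≤ V) (hV : card V = N) (hC : N - t ≤ card C) (hk : k < N - 2 * t) :
    (((V.sort (· ≤ ·)).drop t).take (N - 2 * t)).getD k x ∈
      Set.Icc ((C.sort (· ≤ ·)).getD k x) ((C.sort (· ≤ ·)).getD (k + t) x) := by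
  have hsub := sort_sublist_sort hCV
  have hsorted : (V.sort (· ≤ ·)).SortedLE := (pairwise_sort _ _).sortedLE
  have hlenV : (V.sort (· ≤ ·)).length = N := by rw [length_sort, hV]
  have hlenC : (C.sort (· ≤ ·)).length = card C := length_sort _
  have hCN : card C ≤ N := hV ▸ card_le_card hCV
  have hlenA : (((V.sort (· ≤ ·)).drop t).take (N - 2 * t)).length = N - 2 * t := by
    simp only [List.length_take, List.length_drop, hlenV]; omega
  rw [List.getD_eq_getElem _ _ (by omega), List.getD_eq_getElem _ _ (by omega),
    List.getD_eq_getElem _ _ (by omega), List.getElem_take, List.getElem_drop]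
  constructor
  · calc _ ≤ _ := hsub.getElem_le_getElem_add_of_sortedLE hsorted (by omega)
      _ ≤ _ := hsorted.getElem_le_getElem_of_le (by omega)
  · calc _ = (V.sort (· ≤ ·))[k + t] := by simp only [add_comm]
      _ ≤ _ := hsub.getElem_le_getElem_of_sortedLE hsorted (by omega)

section Interlacing

variable {K : Type*} {c : ℕ} {d a b : ℕ → K}

theorem abs_sum_range_sub_sum_range_le_of_interlaced [AddCommGroup K] [LinearOrder K]
    [IsOrderedAddMonoid K] (ha : ∀ i < c, a i ∈ Set.Icc (d i) (d (i + 1)))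
    (hb : ∀ i < c, b i ∈ Set.Icc (d i) (d (i + 1))) :
    |∑ i ∈ Finset.range c, a i - ∑ i ∈ Finset.range c, b i| ≤ d c - d 0 := by
  have key : ∀ {a b : ℕ → K}, (∀ i < c, a i ∈ Set.Icc (d i) (d (i + 1))) →
      (∀ i < c, b i ∈ Set.Icc (d i) (d (i + 1))) →
      ∑ i ∈ Finset.range c, a i - ∑ i ∈ Finset.range c, b i ≤ d c - d 0 := by
    intro a b ha hb
    rw [← Finset.sum_range_sub, ← Finset.sum_sub_distrib]
    refine Finset.sum_le_sum fun i hi => ?_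
    have := Finset.mem_range.mp hi
    exact sub_le_sub (ha i this).2 (hb i this).1
  exact abs_sub_le_iff.mpr ⟨key ha hb, key hb ha⟩

theorem sum_range_div_mem_Icc [Field K] [LinearOrder K] [IsStrictOrderedRing K] {lo hi : K}
    (hc : 0 < c) (ha : ∀ i < c, a i ∈ Set.Icc lo hi) :
    (∑ i ∈ Finset.range c, a i) / c ∈ Set.Icc lo hi := by
  have hc' : (0 : K) < c := by exact_mod_cast hc
  have hlo := Finset.card_nsmul_le_sum _ a lo fun i hmem => (ha i (Finset.mem_range.mp hmem)).1
  have hhi := Finset.sum_le_card_nsmul _ a hi fun i hmem => (ha i (Finset.mem_range.mp hmem)).2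
  rw [Finset.card_range, nsmul_eq_mul] at hlo hhi
  exact ⟨(le_div_iff₀ hc').mpr (by linarith), (div_le_iff₀ hc').mpr (by linarith)⟩

end Interlacing

theorem approx_agreement_step (t N : ℕ) (hN : 3 * t < N)
    (V W C : Multiset ℝ) (hCV : C ≤ V) (hCW : C ≤ W)
    (hV : Multiset.card V = N) (hW : Multiset.card W = N)
    (hC : N - t ≤ Multiset.card C) (hCne : C ≠ 0) :
    let m := N - 2 * t
    let c := (m - 1) / t + 1
    let A := ((V.sort (· ≤ ·)).drop t).take m
    let B := ((W.sort (· ≤ ·)).drop t).take m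
    let avgA := (∑ i ∈ Finset.range c, A.getD (i * t) 0) / c
    let avgB := (∑ i ∈ Finset.range c, B.getD (i * t) 0) / c
    (C.toFinset.min' (by simpa using hCne) ≤ avgA ∧
     avgA ≤ C.toFinset.max' (by simpa using hCne)) ∧
    (C.toFinset.min' (by simpa using hCne) ≤ avgB ∧
     avgB ≤ C.toFinset.max' (by simpa using hCne)) ∧
    |avgA - avgB| ≤
      (C.toFinset.max' (by simpa using hCne) - C.toFinset.min' (by simpa using hCne)) / c := by
  intro m c A B avgA avgB
  set lo := C.toFinset.min' (by simpa using hCne)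
  set hi := C.toFinset.max' (by simpa using hCne)
  set D : ℕ → ℝ := fun i => (C.sort (· ≤ ·)).getD (i * t) 0
  have hct : c * t ≤ m - 1 + t := by
    have := Nat.div_mul_le_self (m - 1) t
    simp only [c, add_mul, one_mul]; omega
  have hD : ∀ i ≤ c, D i ∈ Set.Icc lo hi := by
    intro i hic
    have hit : i * t < (C.sort (· ≤ ·)).length := by
      have := Nat.mul_le_mul_right t hic
      rw [Multiset.length_sort]; omega
    have hmem : D i ∈ C.toFinset := by
      rw [Multiset.mem_toFinset, ← Multiset.mem_sort (· ≤ ·)]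
      simpa only [D, List.getD_eq_getElem _ _ hit] using List.getElem_mem hit
    exact ⟨Finset.min'_le _ _ hmem, Finset.le_max' _ _ hmem⟩
  have hsel : ∀ {X : Multiset ℝ}, C ≤ X → Multiset.card X = N → ∀ i < c,
      (((X.sort (· ≤ ·)).drop t).take m).getD (i * t) 0 ∈ Set.Icc (D i) (D (i + 1)) := by
    intro X hCX hX i hi
    have : i * t < m := by
      have := Nat.mul_le_mul_right t (Nat.lt_succ_iff.mp hi)
      have := Nat.div_mul_le_self (m - 1) t
      omega
    simpa [D, add_one_mul] using getD_trimmed_mem_Icc 0 hCX hX hC this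
  have hA := hsel hCV hV
  have hB := hsel hCW hW
  have hc : (0 : ℝ) < c := by positivity
  refine ⟨sum_range_div_mem_Icc (Nat.succ_pos _) fun i hi => ?_,
    sum_range_div_mem_Icc (Nat.succ_pos _) fun i hi => ?_, ?_⟩
  · exact ⟨(hD i hi.le).1.trans (hA i hi).1, (hA i hi).2.trans (hD (i + 1) hi).2⟩
  · exact ⟨(hD i hi.le).1.trans (hB i hi).1, (hB i hi).2.trans (hD (i + 1) hi).2⟩
  rw [← sub_div, abs_div, abs_of_pos hc]
  gcongr
  exact (abs_sum_range_sub_sum_range_le_of_interlaced hA hB).trans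
    (sub_le_sub (hD c le_rfl).2 (hD 0 c.zero_le).1)
end

section
/- Let t and N be natural numbers with N > 2t, let B and P be finite sets, and let R ⊆ B × P be a relation. Suppose that card(P) ≤ N − t, that every b ∈ B is related to at least N − 2t elements of P, and that every p ∈ P is related to at most t elements of B. Then card(B) ≤ ⌊t·(N−t)/(N−2t)⌋, where ⌊·/·⌋ denotes natural-number (floor) division. -/
theorem double_counting_bound {α β : Type*}
    (t N : ℕ) (hN : 2 * t < N)
    (B : Finset α) (P : Finset β) (R : α → β → Prop)
    [inst : ∀ a b, Decidable (R a b)]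
    (hP : P.card ≤ N - t)
    (hdegB : ∀ b ∈ B, N - 2 * t ≤ (P.filter (fun p => R b p)).card)
    (hdegP : ∀ p ∈ P, (B.filter (fun b => R b p)).card ≤ t) :
    B.card ≤ t * (N - t) / (N - 2 * t) := by
  rw [Nat.le_div_iff_mul_le (by omega)]
  calc B.card * (N - 2 * t) ≤ P.card * t := Finset.card_mul_le_card_mul R hdegB hdegP
    _ ≤ (N - t) * t := Nat.mul_le_mul_right t hP
    _ = t * (N - t) := mul_comm _ _
end

section
/- Let t and N be natural numbers with t ≥ 1, and let S and T be finite sets of real numbers with card(S) ≤ N + t − 1, card(T) ≤ N + t − 1, and card(S ∩ T) ≥ N − t. For a finite set X of reals and x ∈ X, let rank_X(x) = card{ y ∈ X | y ≤ x }. Then for every x ∈ S ∩ T, |rank_S(x) − rank_T(x)| ≤ 2t − 1. -/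
lemma rank_sub_aux (A B : Finset ℝ) (x : ℝ) (h : B ⊆ A) :
    (A.filter (fun y => y ≤ x)).card ≤ (B.filter (fun y => y ≤ x)).card + (A.card - B.card) := by
  have h1 : A.filter (fun y => y ≤ x) ⊆
      B.filter (fun y => y ≤ x) ∪ (A \ B).filter (fun y => y ≤ x) := by
    intro y hy
    simp only [Finset.mem_filter, Finset.mem_union, Finset.mem_sdiff] at *
    tauto
  calc (A.filter (fun y => y ≤ x)).card
      ≤ (B.filter (fun y => y ≤ x) ∪ (A \ B).filter (fun y => y ≤ x)).card :=
        Finset.card_le_card h1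
    _ ≤ (B.filter (fun y => y ≤ x)).card + ((A \ B).filter (fun y => y ≤ x)).card :=
        Finset.card_union_le _ _
    _ ≤ (B.filter (fun y => y ≤ x)).card + (A \ B).card := by
        exact Nat.add_le_add_left (Finset.card_le_card (Finset.filter_subset (fun y => y ≤ x) (A \ B))) _
    _ = (B.filter (fun y => y ≤ x)).card + (A.card - B.card) := by rw [Finset.card_sdiff_of_subset h]

theorem rank_discrepancy_bound (t N : ℕ) (ht : 1 ≤ t)
    (S T : Finset ℝ)
    (hS : S.card ≤ N + t - 1) (hT : T.card ≤ N + t - 1)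
    (hST : N - t ≤ (S ∩ T).card) :
    ∀ x ∈ S ∩ T,
      |((S.filter (fun y => y ≤ x)).card : ℤ) - ((T.filter (fun y => y ≤ x)).card : ℤ)| ≤
        2 * t - 1 := by
  intro x hx
  have hIS : S ∩ T ⊆ S := Finset.inter_subset_left
  have hIT : S ∩ T ⊆ T := Finset.inter_subset_right
  have hiS : (S ∩ T).card ≤ S.card := Finset.card_le_card hIS
  have hiT : (S ∩ T).card ≤ T.card := Finset.card_le_card hIT
  have hS' := rank_sub_aux S (S ∩ T) x hIS
  have hT' := rank_sub_aux T (S ∩ T) x hIT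
  have hSlo : ((S ∩ T).filter (fun y => y ≤ x)).card ≤ (S.filter (fun y => y ≤ x)).card :=
    Finset.card_le_card (Finset.filter_subset_filter _ hIS)
  have hTlo : ((S ∩ T).filter (fun y => y ≤ x)).card ≤ (T.filter (fun y => y ≤ x)).card :=
    Finset.card_le_card (Finset.filter_subset_filter _ hIT)
  rw [abs_le]
  constructor <;> omega
end
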